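/- A failing sub-program yields sound pruning: if P is a clausal theory that is incomplete (some e⁺ ∈ E⁺ has B ∪ P ⊭ e⁺), then no specialisation of P is a solution; and if P is inconsistent (some e⁻ ∈ E⁻ has B ∪ P ⊨ e⁻), then no generalisation of P is a solution. Hence for any failing clausal theory P (incomplete or inconsistent), every program pruned as a specialisation of an incomplete P or as a generalisation of an inconsistent P is not a solution. -/

import Mathlib

open FirstOrder FirstOrder.Language

/-- A literal: a signed (positive or negative) atomic `L`-formula, given by a relation
symbol applied to terms with free variables in `V`. -/
structure Lit (L : Language) (V : Type*) where
  pos : Bool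
  n : ℕ
  rel : L.Relations n
  args : Fin n → L.Term V

noncomputable instance {L : Language} {V : Type*} : DecidableEq (Lit L V) :=
  Classical.decEq _

/-- Apply a substitution `θ` (a map from variables to `L`-terms) to a literal. -/
def Lit.subst {L : Language} {V : Type*} (l : Lit L V) (θ : V → L.Term V) : Lit L V :=
  ⟨l.pos, l.n, l.rel, fun i => (l.args i).subst θ⟩

/-- Realization (truth) of a literal in structure `M` under valuation `v`. -/
def Lit.Realize {L : Language} {V : Type*} (M : Type*) [L.Structure M]
    (l : Lit L V) (v : V → M) : Prop :=
  if l.pos then Structure.RelMap l.rel (fun i => (l.args i).realize v)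
  else ¬ Structure.RelMap l.rel (fun i => (l.args i).realize v)

/-- A clause: a finite set of literals. -/
abbrev Clause (L : Language) (V : Type*) := Finset (Lit L V)

/-- Clause `C₁` subsumes clause `C₂` iff there is a substitution `θ` with `C₁θ ⊆ C₂`. -/
def Clause.Subsumes {L : Language} {V : Type*} (C₁ C₂ : Clause L V) : Prop :=
  ∃ θ : V → L.Term V, ∀ l ∈ C₁, l.subst θ ∈ C₂

/-- Semantics of a clause: the universal closure of the disjunction of its literals. -/
def Clause.Realize {L : Language} {V : Type*} (M : Type*) [L.Structure M]
    (C : Clause L V) : Prop :=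
  ∀ v : V → M, ∃ l ∈ C, l.Realize M v

/-- Theory subsumption `T₁ ⪯ T₂`: every clause of `T₂` is subsumed by some clause of `T₁`. -/
def TheorySubsumes {L : Language} {V : Type*} (T₁ T₂ : Finset (Clause L V)) : Prop :=
  ∀ C₂ ∈ T₂, ∃ C₁ ∈ T₁, Clause.Subsumes C₁ C₂

/-- `M` is a model of a set of clauses `S`. -/
def Models {L : Language} {V : Type*} (M : Type*) [L.Structure M]
    (S : Set (Clause L V)) : Prop :=
  ∀ C ∈ S, Clause.Realize M C

/-- A ground atom: a relation symbol applied to variable-free terms. -/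
structure GAtom (L : Language) where
  n : ℕ
  rel : L.Relations n
  args : Fin n → L.Term Empty

/-- Truth of a ground atom in a structure. -/
def GAtom.Realize {L : Language} (M : Type*) [L.Structure M] (e : GAtom L) : Prop :=
  Structure.RelMap e.rel fun i => (e.args i).realize (Empty.elim : Empty → M)

/-- A set of clauses `S` entails a ground atom `e`: every model of `S` satisfies `e`. -/
def Entails {L : Language} {V : Type*} (S : Set (Clause L V)) (e : GAtom L) : Prop :=
  ∀ (M : Type*) [L.Structure M], Models M S → GAtom.Realize M e

/-- `P` is a sub-program of `Q` (programs are finite multisets of clauses). -/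
inductive SubProgram {L : Language} {V : Type*} :
    Multiset (Clause L V) → Multiset (Clause L V) → Prop
  | empty (Q : Multiset (Clause L V)) : SubProgram 0 Q
  | step {P Q : Multiset (Clause L V)} {Cp Cq : Clause L V} :
      Cp ∈ P → Cq ∈ Q → Cp ⊆ Cq →
      SubProgram (P.erase Cp) (Q.erase Cq) → SubProgram P Q

/-- A set of clauses `S` entails a sentence `e`: every model of `S` satisfies `e`. -/
def EntailsSentence {L : Language} {V : Type*} (S : Set (Clause L V))
    (e : L.Sentence) : Prop :=
  ∀ (M : Type*) [L.Structure M], Models M S → M ⊨ e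

/-! Subsumption is sound for the clause semantics: if `C₁θ ⊆ C₂`, then a valuation `v`
falsifying `C₂` yields the valuation `x ↦ ⟦θ x⟧ v` falsifying `C₁`. Hence `T₁ ⪯ T₂` makes every
model of `B ∪ T₁` a model of `B ∪ T₂`, so entailment can only grow under generalisation. -/

lemma Lit.realize_subst {L : Language} {V : Type*} {M : Type*} [L.Structure M]
    (l : Lit L V) (θ : V → L.Term V) (v : V → M) :
    (l.subst θ).Realize M v ↔ l.Realize M (fun x => (θ x).realize v) := by
  simp only [Lit.Realize, Lit.subst, Term.realize_subst]

lemma Clause.Subsumes.realize {L : Language} {V : Type*} {M : Type*} [L.Structure M]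
    {C₁ C₂ : Clause L V} (h : C₁.Subsumes C₂) (hC₁ : C₁.Realize M) : C₂.Realize M := by
  obtain ⟨θ, hθ⟩ := h
  intro v
  obtain ⟨l, hl, hlv⟩ := hC₁ fun x => (θ x).realize v
  exact ⟨l.subst θ, hθ l hl, (l.realize_subst θ v).mpr hlv⟩

lemma TheorySubsumes.models_union {L : Language} {V : Type*} {M : Type*} [L.Structure M]
    {B : Set (Clause L V)} {T₁ T₂ : Finset (Clause L V)} (h : TheorySubsumes T₁ T₂)
    (hM : Models M (B ∪ ↑T₁)) : Models M (B ∪ ↑T₂) := by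
  rintro C (hB | hT₂)
  · exact hM C (Or.inl hB)
  · obtain ⟨C₁, hC₁, hsub⟩ := h C hT₂
    exact hsub.realize (hM C₁ (Or.inr hC₁))

lemma TheorySubsumes.entails_union {L : Language} {V : Type*} {B : Set (Clause L V)}
    {T₁ T₂ : Finset (Clause L V)} {e : GAtom L} (h : TheorySubsumes T₁ T₂)
    (he : Entails (B ∪ ↑T₂) e) : Entails (B ∪ ↑T₁) e :=
  fun M _ hM => he M (h.models_union hM)

/-- A failing sub-program yields sound pruning: if `P` is incomplete then no
specialisation of `P` is a solution, and if `P` is inconsistent then no generalisation of `P`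
is a solution. -/
theorem failing_subprogram_sound_pruning {L : Language} {V : Type*}
    (B : Set (Clause L V)) (Epos Eneg : Set (GAtom L)) (P : Finset (Clause L V)) :
    ((∃ e ∈ Epos, ¬ Entails (B ∪ ↑P) e) →
      ∀ H' : Finset (Clause L V), TheorySubsumes P H' →
        ¬ ((∀ e ∈ Epos, Entails (B ∪ ↑H') e) ∧ (∀ e ∈ Eneg, ¬ Entails (B ∪ ↑H') e))) ∧
    ((∃ e ∈ Eneg, Entails (B ∪ ↑P) e) →
      ∀ G : Finset (Clause L V), TheorySubsumes G P →
        ¬ ((∀ e ∈ Epos, Entails (B ∪ ↑G) e) ∧ (∀ e ∈ Eneg, ¬ Entails (B ∪ ↑G) e))) := by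
  refine ⟨?_, ?_⟩
  · rintro ⟨e, he, hPe⟩ H' hPH' ⟨hcomplete, -⟩
    exact hPe (hPH'.entails_union (hcomplete e he))
  · rintro ⟨e, he, hPe⟩ G hGP ⟨-, hconsistent⟩
    exact hconsistent e he (hGP.entails_union hPe)
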